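/- For positive definite n×n matrices A and B and 0 ≤ t ≤ 1, d_l(A, A♢_t B) ≤ d_l(A,B), where A♢_t B = (A♯B)♯_t((A+B)/2) is the geodesic from the geometric mean to the arithmetic mean, and d_l is the Log-Determinant metric. -/

import Mathlib

open Matrix ComplexOrder

/-- Matrix power via functional calculus (spectral decomposition), for Hermitian matrices. -/
noncomputable def mpow {n : Type*} [Fintype n] [DecidableEq n]
    (A : Matrix n n ℂ) (p : ℝ) : Matrix n n ℂ :=
  if hA : A.IsHermitian then
    (hA.eigenvectorUnitary : Matrix n n ℂ) *
      Matrix.diagonal (fun i => ((hA.eigenvalues i ^ p : ℝ) : ℂ)) *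
      star (hA.eigenvectorUnitary : Matrix n n ℂ)
  else 0

/-- Hellinger distance. -/
noncomputable def dh {n : Type*} [Fintype n] [DecidableEq n]
    (A B : Matrix n n ℂ) : ℝ :=
  Real.sqrt ((Matrix.trace (A + B)).re
    - 2 * (Matrix.trace (mpow A (1/2) * mpow B (1/2))).re)

/-- Bures–Wasserstein distance. -/
noncomputable def db {n : Type*} [Fintype n] [DecidableEq n]
    (A B : Matrix n n ℂ) : ℝ :=
  Real.sqrt ((Matrix.trace (A + B)).re
    - 2 * (Matrix.trace (mpow (mpow A (1/2) * B * mpow A (1/2)) (1/2))).re)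

/-- Log-determinant distance. -/
noncomputable def dl {n : Type*} [Fintype n] [DecidableEq n]
    (A B : Matrix n n ℂ) : ℝ :=
  Real.log (((A + B) / 2).det).re
    - (1/2) * (Real.log (A.det.re) + Real.log (B.det.re))

/-- Matrix power mean μ_p(t;A,B) = (t A^p + (1-t) B^p)^{1/p}. -/
noncomputable def mpm {n : Type*} [Fintype n] [DecidableEq n]
    (p t : ℝ) (A B : Matrix n n ℂ) : Matrix n n ℂ :=
  mpow ((t : ℂ) • mpow A p + ((1 - t : ℝ) : ℂ) • mpow B p) (1/p)

/-- Weighted geometric mean A ♯_t B. -/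
noncomputable def sharp {n : Type*} [Fintype n] [DecidableEq n]
    (t : ℝ) (A B : Matrix n n ℂ) : Matrix n n ℂ :=
  mpow A (1/2) * mpow (mpow A (-(1/2)) * B * mpow A (-(1/2))) t * mpow A (1/2)

/-- Quantum fidelity. -/
noncomputable def fid {n : Type*} [Fintype n] [DecidableEq n]
    (A B : Matrix n n ℂ) : ℝ :=
  ((Matrix.trace (mpow (mpow A (1/2) * B * mpow A (1/2)) (1/2))).re) ^ 2

/-!
Write `A = S Sᴴ` and `B = S Λ Sᴴ` with `Λ = diag λ` positive (take `S = A^{1/2} U`, where `U`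
diagonalises `A^{-1/2} B A^{-1/2}`). Both `♯_t` and `d_l` are invariant under the congruence
`X ↦ S X Sᴴ`, so everything reduces to diagonal matrices: `A ♯ B` becomes `Λ^{1/2}`, `(A + B)/2`
becomes `(1 + Λ)/2`, and `A ♢_t B` becomes `diag σ` with `σᵢ = (λᵢ^{1/2})^{1-t} ((1 + λᵢ)/2)^t`.
The claim is then `∑ g(σᵢ) ≤ ∑ g(λᵢ)` for `g(x) = d_l(1, x) = log((1 + x)/2) - (log x)/2`.
Since `g(x) - g(y)` has the sign of `(x - y)(xy - 1)`, `g` grows as `x` moves away from `1`,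
and `σᵢ`, a weighted geometric mean of `λᵢ^{1/2}` and `(1 + λᵢ)/2`, lies between `1` and `λᵢ`.
-/

section MatrixPower

variable {n : Type*} [Fintype n] [DecidableEq n]

lemma Matrix.cfc_diagonal (f : ℝ → ℝ) (d : n → ℝ) :
    cfc f (diagonal fun i => (d i : ℂ)) = diagonal fun i => (f (d i) : ℂ) := by
  classical
  set q := Lagrange.interpolate (Finset.univ.image d) id f
  have hq (i : n) : q.eval (d i) = f (d i) :=
    Lagrange.eval_interpolate_at_node f (Set.injOn_id _)
      (Finset.mem_image_of_mem d (Finset.mem_univ i))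
  have hD : IsSelfAdjoint (diagonal fun i => (d i : ℂ)) := by
    rw [IsSelfAdjoint, star_eq_conjTranspose, diagonal_conjTranspose]
    simp
  rw [cfc_congr (g := fun x => q.eval x), cfc_polynomial q _ hD]
  · rw [show diagonal (fun i => (d i : ℂ)) = diagonalAlgHom ℝ fun i => algebraMap ℝ ℂ (d i)
        from rfl, Polynomial.aeval_algHom_apply, Polynomial.aeval_pi_apply]
    refine congrArg diagonal (funext fun i => ?_)
    rw [Polynomial.aeval_algebraMap_apply_eq_algebraMap_eval, hq]
    rfl
  · intro x hx
    rw [← spectrum.preimage_algebraMap ℂ, Set.mem_preimage, spectrum_diagonal] at hx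
    obtain ⟨i, hi⟩ := hx
    simp only [Complex.coe_algebraMap, Complex.ofReal_inj] at hi
    simp [← hi, hq]

lemma Matrix.cfc_unitary_conj (f : ℝ → ℝ) (Z : Matrix n n ℂ) (U : unitary (Matrix n n ℂ)) :
    cfc f ((U : Matrix n n ℂ) * Z * star (U : Matrix n n ℂ))
      = U * cfc f Z * star (U : Matrix n n ℂ) := by
  by_cases hZ : IsSelfAdjoint Z
  · have hconj : Continuous fun M : Matrix n n ℂ => (U : Matrix n n ℂ) * M * star U := by
      fun_prop
    have := StarAlgHom.map_cfc
      (Unitary.conjStarAlgAut ℂ (Matrix n n ℂ) U : Matrix n n ℂ →⋆ₐ[ℂ] Matrix n n ℂ)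
      f Z (Z.finite_real_spectrum.continuousOn _) hconj
    simpa using this.symm
  · have hUZ : ¬ IsSelfAdjoint ((U : Matrix n n ℂ) * Z * star (U : Matrix n n ℂ)) := by
      rwa [Unitary.isUnit_coe.isSelfAdjoint_conjugate_iff]
    rw [cfc_apply_of_not_predicate _ hZ, cfc_apply_of_not_predicate _ hUZ, mul_zero, zero_mul]

lemma mpow_eq_cfc (Z : Matrix n n ℂ) (p : ℝ) : mpow Z p = cfc (fun x : ℝ => x ^ p) Z := by
  by_cases hZ : Z.IsHermitian
  · rw [hZ.cfc_eq, IsHermitian.cfc, Unitary.conjStarAlgAut_apply, mpow, dif_pos hZ]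
    rfl
  · rw [mpow, dif_neg hZ, cfc_apply_of_not_predicate Z (show ¬ IsSelfAdjoint Z from hZ)]

lemma mpow_isHermitian (Z : Matrix n n ℂ) (p : ℝ) : (mpow Z p).IsHermitian := by
  rw [mpow_eq_cfc]
  exact cfc_predicate _ Z

lemma mpow_diagonal (d : n → ℝ) (p : ℝ) :
    mpow (diagonal fun i => (d i : ℂ)) p = diagonal fun i => ((d i ^ p : ℝ) : ℂ) := by
  rw [mpow_eq_cfc, cfc_diagonal]

lemma mpow_unitary_conj (Z : Matrix n n ℂ) (U : unitary (Matrix n n ℂ)) (p : ℝ) :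
    mpow ((U : Matrix n n ℂ) * Z * star (U : Matrix n n ℂ)) p
      = U * mpow Z p * star (U : Matrix n n ℂ) := by
  rw [mpow_eq_cfc, mpow_eq_cfc, cfc_unitary_conj]

lemma mpow_zero {Z : Matrix n n ℂ} (hZ : Z.IsHermitian) : mpow Z 0 = 1 := by
  simp only [mpow_eq_cfc, Real.rpow_zero]
  exact cfc_const_one ℝ Z

lemma mpow_one {Z : Matrix n n ℂ} (hZ : Z.IsHermitian) : mpow Z 1 = Z := by
  simp only [mpow_eq_cfc, Real.rpow_one]
  exact cfc_id' ℝ Z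

lemma mpow_mul_mpow {Z : Matrix n n ℂ} (hZ : Z.PosDef) (p q : ℝ) :
    mpow Z p * mpow Z q = mpow Z (p + q) := by
  simp only [mpow_eq_cfc]
  rw [← cfc_mul _ _ Z (Z.finite_real_spectrum.continuousOn _)
    (Z.finite_real_spectrum.continuousOn _)]
  refine cfc_congr fun x hx => (Real.rpow_add ?_ p q).symm
  rw [hZ.1.spectrum_real_eq_range_eigenvalues] at hx
  obtain ⟨i, rfl⟩ := hx
  exact hZ.eigenvalues_pos i

lemma mpow_half_mul_mpow_half {Z : Matrix n n ℂ} (hZ : Z.PosDef) :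
    mpow Z (1/2) * mpow Z (1/2) = Z := by
  rw [mpow_mul_mpow hZ, add_halves, mpow_one hZ.1]

lemma mpow_half_mul_mpow_neg_half {Z : Matrix n n ℂ} (hZ : Z.PosDef) :
    mpow Z (1/2) * mpow Z (-(1/2)) = 1 := by
  rw [mpow_mul_mpow hZ, add_neg_cancel, mpow_zero hZ.1]

lemma mpow_neg_half_mul_mpow_half {Z : Matrix n n ℂ} (hZ : Z.PosDef) :
    mpow Z (-(1/2)) * mpow Z (1/2) = 1 := by
  rw [mpow_mul_mpow hZ, neg_add_cancel, mpow_zero hZ.1]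

end MatrixPower

section GeometricMean

variable {n : Type*} [Fintype n] [DecidableEq n]

lemma sharp_conj (t : ℝ) {X : Matrix n n ℂ} (hX : X.PosDef) (Y : Matrix n n ℂ)
    {S : Matrix n n ℂ} (hS : IsUnit S) :
    sharp t (S * X * star S) (S * Y * star S) = S * sharp t X Y * star S := by
  have hC : (S * X * star S).PosDef := hS.posDef_star_right_conjugate_iff.mpr hX
  have hC_sq := mpow_half_mul_mpow_half hC
  have hC_inv := mpow_half_mul_mpow_neg_half hC
  have hC_inv' := mpow_neg_half_mul_mpow_half hC
  have hX_sq := mpow_half_mul_mpow_half hX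
  have hX_inv := mpow_half_mul_mpow_neg_half hX
  have hX_inv' := mpow_neg_half_mul_mpow_half hX
  have hC_star : star (mpow (S * X * star S) (-(1/2))) = mpow (S * X * star S) (-(1/2)) :=
    (mpow_isHermitian _ _).star_eq
  have hX_star : star (mpow X (1/2)) = mpow X (1/2) := (mpow_isHermitian _ _).star_eq
  simp only [sharp] at *
  generalize mpow (S * X * star S) (1/2) = C₂ at *
  generalize mpow (S * X * star S) (-(1/2)) = C₂' at *
  generalize mpow X (1/2) = X₂ at *
  generalize mpow X (-(1/2)) = X₂' at *
  -- `C^{-1/2} S X^{1/2}` is unitary, so `mpow · t` commutes with conjugation by it.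
  have hR_star : star (C₂' * S * X₂) = X₂ * star S * C₂' := by
    simp only [star_mul, hC_star, hX_star, mul_assoc]
  have hR : C₂' * S * X₂ ∈ unitary (Matrix n n ℂ) := by
    rw [← Matrix.unitaryGroup, mem_unitaryGroup_iff, hR_star]
    calc C₂' * S * X₂ * (X₂ * star S * C₂') = C₂' * (S * (X₂ * X₂) * star S) * C₂' := by
          noncomm_ring
      _ = (C₂' * C₂) * (C₂ * C₂') := by rw [hX_sq, ← hC_sq]; noncomm_ring
      _ = 1 := by rw [hC_inv, hC_inv', one_mul]
  have hinner : C₂' * (S * Y * star S) * C₂'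
      = (C₂' * S * X₂) * (X₂' * Y * X₂') * star (C₂' * S * X₂) := by
    rw [hR_star]
    calc C₂' * (S * Y * star S) * C₂'
        = C₂' * S * (X₂ * X₂') * Y * (X₂' * X₂) * star S * C₂' := by
          rw [hX_inv, hX_inv']; noncomm_ring
      _ = _ := by noncomm_ring
  rw [hinner, mpow_unitary_conj _ ⟨_, hR⟩, hR_star]
  calc C₂ * (C₂' * S * X₂ * mpow (X₂' * Y * X₂') t * (X₂ * star S * C₂')) * C₂
      = (C₂ * C₂') * (S * (X₂ * mpow (X₂' * Y * X₂') t * X₂) * star S) * (C₂' * C₂) := by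
        noncomm_ring
    _ = S * (X₂ * mpow (X₂' * Y * X₂') t * X₂) * star S := by rw [hC_inv, hC_inv', one_mul, mul_one]

lemma sharp_diagonal (t : ℝ) {a b : n → ℝ} (ha : ∀ i, 0 < a i) (hb : ∀ i, 0 ≤ b i) :
    sharp t (diagonal fun i => (a i : ℂ)) (diagonal fun i => (b i : ℂ))
      = diagonal fun i => ((a i ^ (1 - t) * b i ^ t : ℝ) : ℂ) := by
  simp only [sharp, mpow_diagonal, diagonal_mul_diagonal, ← Complex.ofReal_mul]
  refine congrArg diagonal (funext fun i => congrArg _ ?_)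
  have hinner : a i ^ (-(1/2) : ℝ) * b i * a i ^ (-(1/2) : ℝ) = a i ^ (-1 : ℝ) * b i := by
    rw [mul_right_comm, ← Real.rpow_add (ha i)]
    norm_num
  rw [hinner, Real.mul_rpow (Real.rpow_nonneg (ha i).le _) (hb i), ← Real.rpow_mul (ha i).le,
    show 1 - t = 1/2 + -1 * t + 1/2 by ring, Real.rpow_add (ha i), Real.rpow_add (ha i)]
  ring

lemma Matrix.PosDef.exists_simultaneous_diagonalization {A B : Matrix n n ℂ} (hA : A.PosDef)
    (hB : B.PosDef) :
    ∃ (S : Matrix n n ℂ) (l : n → ℝ), IsUnit S ∧ (∀ i, 0 < l i) ∧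
      A = S * star S ∧ B = S * diagonal (fun i => (l i : ℂ)) * star S := by
  have hA_sq := mpow_half_mul_mpow_half hA
  have hA_inv := mpow_half_mul_mpow_neg_half hA
  have hA_inv' := mpow_neg_half_mul_mpow_half hA
  have hA_star : star (mpow A (1/2)) = mpow A (1/2) := (mpow_isHermitian _ _).star_eq
  have hA_star' : star (mpow A (-(1/2))) = mpow A (-(1/2)) := (mpow_isHermitian _ _).star_eq
  have hT : (mpow A (-(1/2)) * B * mpow A (-(1/2))).PosDef := by
    have h := (Units.isUnit ⟨_, _, hA_inv', hA_inv⟩).posDef_star_right_conjugate_iff.mpr hB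
    rwa [Units.val_mk, hA_star'] at h
  have hB_eq : B = mpow A (1/2) * (mpow A (-(1/2)) * B * mpow A (-(1/2))) * mpow A (1/2) := by
    simp only [← mul_assoc, hA_inv, one_mul]
    rw [mul_assoc, hA_inv', mul_one]
  generalize mpow A (-(1/2)) * B * mpow A (-(1/2)) = T at hT hB_eq
  set U := hT.1.eigenvectorUnitary
  refine ⟨mpow A (1/2) * U, hT.1.eigenvalues,
    (Units.isUnit ⟨_, _, hA_inv, hA_inv'⟩).mul Unitary.isUnit_coe, hT.eigenvalues_pos, ?_, ?_⟩
  · rw [star_mul, hA_star, mul_assoc, ← mul_assoc (U : Matrix n n ℂ),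
      mem_unitaryGroup_iff.mp U.2, one_mul, hA_sq]
  · rw [hB_eq, star_mul, hA_star]
    conv_lhs => rw [hT.1.spectral_theorem, Unitary.conjStarAlgAut_apply]
    simp only [mul_assoc]
    rfl

end GeometricMean

section LogDet

variable {n : Type*} [Fintype n] [DecidableEq n]

lemma Matrix.div_two_eq_smul (M : Matrix n n ℂ) : M / 2 = (2⁻¹ : ℂ) • M := by
  have h2 : (2 : Matrix n n ℂ) = (2 : ℂ) • 1 := by rw [two_smul, one_add_one_eq_two]
  rw [div_eq_mul_inv, Matrix.inv_eq_right_inv (B := (2⁻¹ : ℂ) • 1)]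
  · simp
  · rw [h2, smul_mul_smul_comm, mul_inv_cancel₀ two_ne_zero, one_mul, one_smul]

lemma Matrix.PosDef.re_det_pos {X : Matrix n n ℂ} (hX : X.PosDef) : 0 < X.det.re :=
  (Complex.pos_iff.mp hX.det_pos).1

lemma Matrix.PosDef.add_div_two {X Y : Matrix n n ℂ} (hX : X.PosDef) (hY : Y.PosDef) :
    ((X + Y) / 2).PosDef := by
  rw [div_two_eq_smul]
  exact (hX.add hY).smul (by norm_num)

lemma Matrix.re_det_mul_mul_star (S X : Matrix n n ℂ) :
    (S * X * star S).det.re = Complex.normSq S.det * X.det.re := by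
  rw [det_mul, det_mul, star_eq_conjTranspose, det_conjTranspose, mul_right_comm,
    Complex.star_def, Complex.mul_conj, Complex.re_ofReal_mul]

lemma Matrix.mul_mul_star_add_mul_mul_star_div_two (S X Y : Matrix n n ℂ) :
    (S * X * star S + S * Y * star S) / 2 = S * ((X + Y) / 2) * star S := by
  simp only [div_two_eq_smul, ← mul_add, ← add_mul, mul_smul_comm, smul_mul_assoc]

lemma Matrix.one_add_diagonal_div_two (d : n → ℝ) :
    (1 + diagonal fun i => (d i : ℂ)) / 2 = diagonal fun i => (((1 + d i) / 2 : ℝ) : ℂ) := by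
  rw [div_two_eq_smul, ← diagonal_one, diagonal_add, ← diagonal_smul]
  refine congrArg diagonal (funext fun i => ?_)
  simp only [Pi.smul_apply, smul_eq_mul]
  push_cast
  ring

lemma dl_conj {X Y S : Matrix n n ℂ} (hX : X.PosDef) (hY : Y.PosDef) (hS : IsUnit S) :
    dl (S * X * star S) (S * Y * star S) = dl X Y := by
  have hc : Complex.normSq S.det ≠ 0 :=
    (Complex.normSq_pos.mpr ((isUnit_iff_isUnit_det S).mp hS).ne_zero).ne'
  simp only [dl, mul_mul_star_add_mul_mul_star_div_two, re_det_mul_mul_star]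
  rw [Real.log_mul hc (hX.add_div_two hY).re_det_pos.ne', Real.log_mul hc hX.re_det_pos.ne',
    Real.log_mul hc hY.re_det_pos.ne']
  ring

/-- `dl 1 x` for `1 × 1` matrices. -/
noncomputable def scalarDl (x : ℝ) : ℝ := Real.log ((1 + x) / 2) - Real.log x / 2

lemma dl_one_diagonal {d : n → ℝ} (hd : ∀ i, 0 < d i) :
    dl 1 (diagonal fun i => (d i : ℂ)) = ∑ i, scalarDl (d i) := by
  have hmid (i : n) : 0 < (1 + d i) / 2 := by linarith [hd i]
  simp only [dl, scalarDl, one_add_diagonal_div_two, det_diagonal, det_one, Complex.one_re,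
    Real.log_one, ← Complex.ofReal_prod, Complex.ofReal_re]
  rw [Real.log_prod fun i _ => (hmid i).ne', Real.log_prod fun i _ => (hd i).ne',
    Finset.sum_sub_distrib, ← Finset.sum_div]
  ring

end LogDet

lemma Real.rpow_one_sub_mul_rpow_mem_uIcc {a b t : ℝ} (ha : 0 < a) (hb : 0 < b) (ht0 : 0 ≤ t)
    (ht1 : t ≤ 1) : a ^ (1 - t) * b ^ t ∈ Set.uIcc a b := by
  wlog hab : a ≤ b generalizing a b t
  · have h := this hb ha (t := 1 - t) (by linarith) (by linarith) (le_of_not_ge hab)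
    rwa [Set.uIcc_comm, sub_sub_cancel, mul_comm] at h
  refine Set.mem_uIcc_of_le ?_ ?_
  · calc a = a ^ (1 - t) * a ^ t := by rw [← Real.rpow_add ha, sub_add_cancel, Real.rpow_one]
      _ ≤ a ^ (1 - t) * b ^ t := by gcongr
  · calc a ^ (1 - t) * b ^ t ≤ b ^ (1 - t) * b ^ t := by gcongr
      _ = b := by rw [← Real.rpow_add hb, sub_add_cancel, Real.rpow_one]

lemma scalarDl_le_of_mem_uIcc {x y : ℝ} (hx : 0 < x) (hy : y ∈ Set.uIcc 1 x) :
    scalarDl y ≤ scalarDl x := by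
  have hy_pos : 0 < y := by
    rcases Set.mem_uIcc.mp hy with ⟨h1, -⟩ | ⟨h1, -⟩ <;> linarith
  have key : x * (1 + y) ^ 2 ≤ y * (1 + x) ^ 2 := by
    have h : 0 ≤ (x - y) * (x * y - 1) := by
      rcases Set.mem_uIcc.mp hy with ⟨h1, h2⟩ | ⟨h1, h2⟩
      · exact mul_nonneg (by linarith) (by nlinarith)
      · exact mul_nonneg_of_nonpos_of_nonpos (by linarith) (by nlinarith)
    nlinarith [h]
  have hlog := Real.log_le_log (by positivity) key
  rw [Real.log_mul hx.ne' (by positivity), Real.log_mul hy_pos.ne' (by positivity),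
    Real.log_pow, Real.log_pow] at hlog
  simp only [scalarDl]
  rw [Real.log_div (by positivity) two_ne_zero, Real.log_div (by positivity) two_ne_zero]
  push_cast at hlog
  linarith

lemma rpow_half_rpow_one_sub_mul_rpow_mem_uIcc {l t : ℝ} (hl : 0 < l) (ht0 : 0 ≤ t)
    (ht1 : t ≤ 1) : (l ^ (1/2 : ℝ)) ^ (1 - t) * ((1 + l) / 2) ^ t ∈ Set.uIcc 1 l := by
  have hsqrt : l ^ (1/2 : ℝ) ∈ Set.uIcc 1 l := by
    simpa using
      Real.rpow_one_sub_mul_rpow_mem_uIcc one_pos hl (t := 1/2) (by norm_num) (by norm_num)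
  have hmid : (1 + l) / 2 ∈ Set.uIcc 1 l := by
    rcases le_total 1 l with h | h
    · exact Set.mem_uIcc_of_le (by linarith) (by linarith)
    · exact Set.mem_uIcc_of_ge (by linarith) (by linarith)
  exact Set.uIcc_subset_uIcc hsqrt hmid
    (Real.rpow_one_sub_mul_rpow_mem_uIcc (by positivity) (by positivity) ht0 ht1)

theorem stmt17 {n : Type*} [Fintype n] [DecidableEq n]
    {A B : Matrix n n ℂ} (hA : A.PosDef) (hB : B.PosDef)
    {t : ℝ} (ht0 : 0 ≤ t) (ht1 : t ≤ 1) :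
    dl A (sharp t (sharp (1/2) A B) ((A + B) / 2)) ≤ dl A B := by
  obtain ⟨S, l, hS, hl, rfl, rfl⟩ := hA.exists_simultaneous_diagonalization hB
  rw [show S * star S = S * 1 * star S by rw [mul_one]]
  have hsqrt (i : n) : 0 < l i ^ (1/2 : ℝ) := Real.rpow_pos_of_pos (hl i) _
  have hmid (i : n) : 0 < (1 + l i) / 2 := by linarith [hl i]
  have hgeo : sharp (1/2) (S * 1 * star S) (S * diagonal (fun i => (l i : ℂ)) * star S)
      = S * diagonal (fun i => ((l i ^ (1/2 : ℝ) : ℝ) : ℂ)) * star S := by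
    have hone : (1 : Matrix n n ℂ) = diagonal fun _ => ((1 : ℝ) : ℂ) := by simp
    rw [sharp_conj _ PosDef.one _ hS, hone,
      sharp_diagonal _ (fun _ => one_pos) fun i => (hl i).le]
    simp
  have harith : (S * 1 * star S + S * diagonal (fun i => (l i : ℂ)) * star S) / 2
      = S * diagonal (fun i => (((1 + l i) / 2 : ℝ) : ℂ)) * star S := by
    rw [mul_mul_star_add_mul_mul_star_div_two, one_add_diagonal_div_two]
  rw [hgeo, harith, sharp_conj _ (PosDef.diagonal fun i => by exact_mod_cast hsqrt i) _ hS,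
    sharp_diagonal _ hsqrt fun i => (hmid i).le]
  have hpath (i : n) : 0 < (l i ^ (1/2 : ℝ)) ^ (1 - t) * ((1 + l i) / 2) ^ t := by
    have := hsqrt i; have := hmid i; positivity
  rw [dl_conj PosDef.one (PosDef.diagonal fun i => by exact_mod_cast hpath i) hS,
    dl_conj PosDef.one (PosDef.diagonal fun i => by exact_mod_cast hl i) hS,
    dl_one_diagonal hpath, dl_one_diagonal hl]
  exact Finset.sum_le_sum fun i _ =>
    scalarDl_le_of_mem_uIcc (hl i) (rpow_half_rpow_one_sub_mul_rpow_mem_uIcc (hl i) ht0 ht1)
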